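/- Let P be a poset with least element 0 and Z(P)^× ≠ ∅ satisfying the ascending chain condition for annihilators. Then the number of annihilator prime ideals of P equals the clique number of the zero-divisor graph Γ(P), i.e., |Ann(P)| = ω(P). -/

import Mathlib

/-- `L(x,y) = {z : z ≤ x ∧ z ≤ y}`, where the least element `0` of the poset is `⊥`. -/
def LSet (P : Type*) [PartialOrder P] [OrderBot P] (x y : P) : Set P := {z | z ≤ x ∧ z ≤ y}

theorem LSet_comm (P : Type*) [PartialOrder P] [OrderBot P] (x y : P) :
    LSet P x y = LSet P y x := by
  ext z; exact ⟨fun h => ⟨h.2, h.1⟩, fun h => ⟨h.2, h.1⟩⟩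

/-- The annihilator of `x`: `ann(x) = {y : L(x,y) = {0}}`. -/
def ann (P : Type*) [PartialOrder P] [OrderBot P] (x : P) : Set P := {y | LSet P x y = {⊥}}

theorem mem_ann_comm (P : Type*) [PartialOrder P] [OrderBot P] (x y : P) :
    y ∈ ann P x ↔ x ∈ ann P y := by
  simp only [ann, Set.mem_setOf_eq, LSet_comm P x y]

/-- The set `Z(P)^× = Z(P) \ {0}` of nonzero zero-divisors of `P`. -/
def ZDivX (P : Type*) [PartialOrder P] [OrderBot P] : Set P :=
  {x | x ≠ ⊥ ∧ ∃ y : P, y ≠ ⊥ ∧ LSet P x y = {⊥}}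

/-- The zero-divisor graph `Γ(P)` on `Z(P)^×`. -/
def zdGraph (P : Type*) [PartialOrder P] [OrderBot P] : SimpleGraph (ZDivX P) where
  Adj a b := (a : P) ≠ (b : P) ∧ LSet P a b = {⊥}
  symm := by
    constructor
    rintro a b ⟨h1, h2⟩
    exact ⟨fun h => h1 h.symm, by rw [LSet_comm]; exact h2⟩
  loopless := by constructor; rintro a ⟨h1, _⟩; exact h1 rfl

/-- The equivalence `x ∼ y ↔ ann(x) = ann(y)` on `Z(P)^×`. -/
def annSetoid (P : Type*) [PartialOrder P] [OrderBot P] : Setoid (ZDivX P) where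
  r a b := ann P a = ann P b
  iseqv := ⟨fun _ => rfl, Eq.symm, Eq.trans⟩

/-- The reduced zero-divisor graph `Γ_E(P)`, on equivalence classes of `Z(P)^×`. -/
def redGraph (P : Type*) [PartialOrder P] [OrderBot P] :
    SimpleGraph (Quotient (annSetoid P)) where
  Adj := Quotient.lift₂ (fun a b => LSet P (a : P) (b : P) = {⊥}) (by
    intro a b a' b' ha hb
    have ha' : ann P (a : P) = ann P (a' : P) := ha
    have hb' : ann P (b : P) = ann P (b' : P) := hb
    apply propext
    constructor
    · intro h
      have h1 : (b : P) ∈ ann P (a : P) := h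
      rw [ha', mem_ann_comm, hb', mem_ann_comm] at h1
      exact h1
    · intro h
      have h1 : (b' : P) ∈ ann P (a' : P) := h
      rw [← ha', mem_ann_comm, ← hb', mem_ann_comm] at h1
      exact h1)
  symm := by
    constructor
    intro x y
    refine Quotient.inductionOn₂ x y ?_
    intro a b h
    have h' : LSet P (a : P) (b : P) = {⊥} := h
    show LSet P (b : P) (a : P) = {⊥}
    rw [LSet_comm]; exact h'
  loopless := by
    constructor
    intro x
    refine Quotient.inductionOn x ?_
    intro a h
    have h' : LSet P (a : P) (a : P) = {⊥} := h
    have hm : (a : P) ∈ LSet P (a : P) (a : P) := ⟨le_refl _, le_refl _⟩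
    rw [h'] at hm
    exact a.2.1 hm
/-- `I` is an ideal of the poset `P`: a nonempty downward-closed subset. -/
def IsIdeal (P : Type*) [PartialOrder P] [OrderBot P] (I : Set P) : Prop :=
  I.Nonempty ∧ ∀ x ∈ I, ∀ y : P, y ≤ x → y ∈ I

/-- `I` is a prime ideal of the poset `P`: a proper ideal such that
`L(x,y) ⊆ I` implies `x ∈ I` or `y ∈ I`. -/
def IsPrimeIdeal (P : Type*) [PartialOrder P] [OrderBot P] (I : Set P) : Prop :=
  IsIdeal P I ∧ I ≠ Set.univ ∧ ∀ x y : P, LSet P x y ⊆ I → x ∈ I ∨ y ∈ I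

/-- The family `𝔄 = {ann(x) : x ∈ P \ {0}}`. -/
def AnnFam (P : Type*) [PartialOrder P] [OrderBot P] : Set (Set P) :=
  {I | ∃ x : P, x ≠ ⊥ ∧ ann P x = I}

/-- `Ann(P)`, the set of annihilator prime ideals of `P`. -/
def AnnPrimes (P : Type*) [PartialOrder P] [OrderBot P] : Set (Set P) :=
  {I | IsPrimeIdeal P I ∧ ∃ x : P, ann P x = I}

/-- `P` satisfies the ACC for annihilators: every nonempty subfamily of `𝔄` has a
maximal element. -/
def ACCAnn (P : Type*) [PartialOrder P] [OrderBot P] : Prop :=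
  ∀ S : Set (Set P), S ⊆ AnnFam P → S.Nonempty → ∃ I ∈ S, ∀ J ∈ S, I ⊆ J → I = J


/-!
Under the ACC every `ann x` with `x ≠ 0` lies in a maximal member of `𝔄`, and maximal members
of `𝔄` are prime. If `ann x ≠ ann y` are both prime, some `a` lies in one but not the other,
and primality applied to `L(z,a)` for `z ∈ L(x,y)` forces `L(x,y) = {0}`; so representatives of
the annihilator primes form a clique. Conversely, sending each vertex of a clique to a maximal
annihilator above its own annihilator is injective: if adjacent `a, b` had `ann a, ann b ⊆ ann m`,
then `b ∈ ann m`, so `m ∈ ann b ⊆ ann m`, forcing `m = 0`.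
-/

section Annihilators

variable {P : Type*} [PartialOrder P] [OrderBot P]

lemma mem_ann_iff {x y : P} : y ∈ ann P x ↔ ∀ z, z ≤ x → z ≤ y → z = ⊥ := by
  refine ⟨fun h z hzx hzy => ?_, fun h => ?_⟩
  · have hz : z ∈ LSet P x y := ⟨hzx, hzy⟩
    rwa [show LSet P x y = {⊥} from h] at hz
  · refine Set.Subset.antisymm (fun z hz => h z hz.1 hz.2) ?_
    rintro _ rfl
    exact ⟨bot_le, bot_le⟩

lemma eq_bot_of_mem_ann_of_le {x z : P} (hz : z ∈ ann P x) (hzx : z ≤ x) : z = ⊥ :=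
  mem_ann_iff.mp hz z hzx le_rfl

lemma bot_mem_ann (x : P) : ⊥ ∈ ann P x :=
  mem_ann_iff.mpr fun _ _ hz => le_bot_iff.mp hz

lemma ann_bot : ann P (⊥ : P) = Set.univ :=
  Set.eq_univ_of_forall fun _ => mem_ann_iff.mpr fun _ hz _ => le_bot_iff.mp hz

lemma ann_antitone : Antitone (ann P) := fun _ _ hxy _ ha =>
  mem_ann_iff.mpr fun z hzx hza => mem_ann_iff.mp ha z (hzx.trans hxy) hza

lemma ann_isIdeal (x : P) : IsIdeal P (ann P x) :=
  ⟨⟨⊥, bot_mem_ann x⟩, fun _ ha _ hb =>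
    mem_ann_iff.mpr fun z hzx hzb => mem_ann_iff.mp ha z hzx (hzb.trans hb)⟩

lemma ann_ne_univ {x : P} (hx : x ≠ ⊥) : ann P x ≠ Set.univ := fun h =>
  hx (eq_bot_of_mem_ann_of_le (h ▸ Set.mem_univ x) le_rfl)

lemma exists_ne_bot_le_of_notMem_ann {m x : P} (hx : x ∉ ann P m) :
    ∃ u, u ≠ ⊥ ∧ u ≤ x ∧ u ≤ m := by
  simp only [mem_ann_iff, not_forall] at hx
  obtain ⟨u, hum, hux, hu⟩ := hx
  exact ⟨u, hu, hux, hum⟩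

lemma isPrimeIdeal_of_maximal_annFam {I : Set P} (hI : Maximal (· ∈ AnnFam P) I) :
    IsPrimeIdeal P I := by
  obtain ⟨⟨m, hm, rfl⟩, hmax⟩ := hI
  have ann_eq_of_le {u : P} (hu : u ≠ ⊥) (hum : u ≤ m) : ann P u = ann P m :=
    (hmax ⟨u, hu, rfl⟩ (ann_antitone hum)).antisymm (ann_antitone hum)
  refine ⟨ann_isIdeal m, ann_ne_univ hm, fun x y hxy => ?_⟩
  by_contra! ⟨hx, hy⟩
  obtain ⟨u, hu, hux, hum⟩ := exists_ne_bot_le_of_notMem_ann hx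
  obtain ⟨v, hv, hvy, hvm⟩ := exists_ne_bot_le_of_notMem_ann hy
  -- `L(u,v) ⊆ L(x,y) ⊆ ann m = ann u`, so `L(u,v) = {0}`, i.e. `v ∈ ann u = ann v`.
  have hvu : v ∈ ann P u := mem_ann_iff.mpr fun z hzu hzv => by
    have hz : z ∈ ann P u := ann_eq_of_le hu hum ▸ hxy ⟨hzu.trans hux, hzv.trans hvy⟩
    exact eq_bot_of_mem_ann_of_le hz hzu
  rw [ann_eq_of_le hu hum, ← ann_eq_of_le hv hvm] at hvu
  exact hv (eq_bot_of_mem_ann_of_le hvu le_rfl)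

lemma exists_maximal_annFam_superset (hacc : ACCAnn P) {x : P} (hx : x ≠ ⊥) :
    ∃ I, ann P x ⊆ I ∧ Maximal (· ∈ AnnFam P) I := by
  obtain ⟨I, ⟨hI, hxI⟩, hImax⟩ :=
    hacc {I | I ∈ AnnFam P ∧ ann P x ⊆ I} (fun _ hI => hI.1)
      ⟨ann P x, ⟨x, hx, rfl⟩, le_rfl⟩
  exact ⟨I, hxI, hI, fun J hJ hIJ => (hImax J ⟨hJ, hxI.trans hIJ⟩ hIJ).ge⟩

lemma mem_ann_of_not_subset_of_isPrimeIdeal {x y : P} (hy : IsPrimeIdeal P (ann P y))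
    (hxy : ¬ ann P x ⊆ ann P y) : y ∈ ann P x := by
  obtain ⟨a, hax, hay⟩ := Set.not_subset.mp hxy
  refine mem_ann_iff.mpr fun z hzx hzy => ?_
  have hza : LSet P z a ⊆ ann P y := fun w hw => by
    rw [mem_ann_iff.mp hax w (hw.1.trans hzx) hw.2]
    exact bot_mem_ann y
  exact (hy.2.2 z a hza).elim (eq_bot_of_mem_ann_of_le · hzy) (absurd · hay)

lemma mem_ann_of_isPrimeIdeal_of_ne {x y : P} (hx : IsPrimeIdeal P (ann P x))
    (hy : IsPrimeIdeal P (ann P y)) (hne : ann P x ≠ ann P y) : y ∈ ann P x := by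
  by_cases hxy : ann P x ⊆ ann P y
  · exact (mem_ann_comm P x y).mpr
      (mem_ann_of_not_subset_of_isPrimeIdeal hx fun hyx => hne (hxy.antisymm hyx))
  · exact mem_ann_of_not_subset_of_isPrimeIdeal hy hxy

lemma mem_ZDivX_of_isPrimeIdeal_ann (hZ : (ZDivX P).Nonempty) {x : P}
    (hx : IsPrimeIdeal P (ann P x)) : x ∈ ZDivX P := by
  have hx0 : x ≠ ⊥ := by
    rintro rfl
    exact hx.2.1 ann_bot
  obtain ⟨a, ha, b, hb, hab⟩ := hZ
  have hsub : LSet P a b ⊆ ann P x := hab ▸ Set.singleton_subset_iff.mpr (bot_mem_ann x)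
  rcases hx.2.2 a b hsub with h | h
  exacts [⟨hx0, a, ha, h⟩, ⟨hx0, b, hb, h⟩]

lemma eq_bot_of_mem_ann_of_ann_subset {a b m : P} (hab : b ∈ ann P a)
    (ham : ann P a ⊆ ann P m) (hbm : ann P b ⊆ ann P m) : m = ⊥ :=
  eq_bot_of_mem_ann_of_le (hbm ((mem_ann_comm P _ _).mp (ham hab))) le_rfl

lemma exists_isClique_encard_annPrimes_le (hZ : (ZDivX P).Nonempty) :
    ∃ s : Set (ZDivX P), (zdGraph P).IsClique s ∧ (AnnPrimes P).encard ≤ s.encard := by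
  have hrep (I : AnnPrimes P) : ∃ a : ZDivX P, ann P a = I := by
    obtain ⟨I, hI, x, rfl⟩ := I
    exact ⟨⟨x, mem_ZDivX_of_isPrimeIdeal_ann hZ hI⟩, rfl⟩
  choose f hf using hrep
  have hprime (I : AnnPrimes P) : IsPrimeIdeal P (ann P (f I)) := hf I ▸ I.2.1
  have hann {I J} (h : ann P (f I) = ann P (f J)) : I = J :=
    Subtype.ext (by rw [← hf I, ← hf J, h])
  have hinj : f.Injective := fun I J h => hann (by rw [h])
  refine ⟨Set.range f, ?_, hinj.encard_range⟩
  rintro _ ⟨I, rfl⟩ _ ⟨J, rfl⟩ hIJ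
  refine ⟨fun h => hIJ (Subtype.ext h), ?_⟩
  exact mem_ann_of_isPrimeIdeal_of_ne (hprime I) (hprime J) fun h => hIJ (by rw [hann h])

lemma encard_le_encard_annPrimes_of_isClique (hacc : ACCAnn P) {s : Set (ZDivX P)}
    (hs : (zdGraph P).IsClique s) : s.encard ≤ (AnnPrimes P).encard := by
  choose g hg using fun a : ZDivX P => exists_maximal_annFam_superset hacc a.2.1
  have hinj : Set.InjOn g s := fun a ha b hb hab => by
    by_contra hne
    obtain ⟨m, hm, hgm⟩ := (hg b).2.1
    have hbm := hgm ▸ (hg b).1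
    have ham := hgm ▸ hab ▸ (hg a).1
    exact hm (eq_bot_of_mem_ann_of_ann_subset (hs ha hb hne).2 ham hbm)
  have hmaps : g '' s ⊆ AnnPrimes P := by
    rintro _ ⟨a, -, rfl⟩
    obtain ⟨m, -, hm⟩ := (hg a).2.1
    exact ⟨isPrimeIdeal_of_maximal_annFam (hg a).2, m, hm⟩
  calc s.encard = (g '' s).encard := hinj.encard_image.symm
    _ ≤ (AnnPrimes P).encard := Set.encard_le_encard hmaps

end Annihilators

/-- If `P` satisfies the ACC for annihilators, then `|Ann(P)| = ω(P)`, where `ω(P)` is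
the least upper bound of the sizes of the cliques of `Γ(P)`. -/
theorem stmt16 (P : Type*) [PartialOrder P] [OrderBot P] (hZ : (ZDivX P).Nonempty)
    (hacc : ACCAnn P) :
    (AnnPrimes P).encard =
      ⨆ (s : Set (ZDivX P)) (_ : (zdGraph P).IsClique s), s.encard := by
  obtain ⟨s, hs, hle⟩ := exists_isClique_encard_annPrimes_le hZ
  exact le_antisymm (le_iSup₂_of_le s hs hle)
    (iSup₂_le fun _ => encard_le_encard_annPrimes_of_isClique hacc)
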